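/- arXiv:2202.02235 — 3 statements merged into one kernel-verified Lean document; each statement's English description precedes it below -/
import Mathlib

section
/- Let θ > 0 and w₀ > 0. If ρ > 0 and m are real numbers with |m|/ρ + (ρ^θ − 1)/θ ≤ w₀, then ρ · e^{|m|/ρ} ≤ e^{w₀}. -/
open Real

theorem Real.log_le_rpow_sub_one_div {x t : ℝ} (hx : 0 < x) (ht : 0 < t) :
    log x ≤ (x ^ t - 1) / t := by
  rw [le_div_iff₀' ht, ← log_rpow hx]
  exact log_le_sub_one_of_pos (rpow_pos_of_pos hx t)

theorem stmt_2_general (θ w₀ ρ m : ℝ) (hθ : 0 < θ) (hρ : 0 < ρ)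
    (hinv : |m| / ρ + (ρ ^ θ - 1) / θ ≤ w₀) :
    ρ * Real.exp (|m| / ρ) ≤ Real.exp w₀ := by
  calc ρ * exp (|m| / ρ) = exp (log ρ + |m| / ρ) := by rw [exp_add, exp_log hρ]
    _ ≤ exp w₀ := exp_le_exp.mpr (by linarith [log_le_rpow_sub_one_div hρ hθ])

theorem stmt_2 (θ w₀ ρ m : ℝ) (hθ : 0 < θ) (hw : 0 < w₀) (hρ : 0 < ρ)
    (hinv : |m| / ρ + (ρ ^ θ - 1) / θ ≤ w₀) :
    ρ * Real.exp (|m| / ρ) ≤ Real.exp w₀ :=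
  stmt_2_general θ w₀ ρ m hθ hρ hinv
end

section
/- Let θ ∈ (0,1] and w₀ > 0. If ρ > 0 with |m|/ρ + (ρ^θ − 1)/θ ≤ w₀ and ρ ≤ e^{w₀}, then |m|/ρ^{2/3} ≤ w₀·e^{w₀/3} + 3·e^{−1}. -/
/-! The hypothesis bounds `|m| / ρ` by `w₀ - log ρ`, since `log ρ ≤ (ρ ^ θ - 1) / θ`. Multiplying
by `ρ ^ (1/3) ≤ exp (w₀ / 3)` leaves `w₀ * exp (w₀ / 3) - ρ ^ (1/3) * log ρ`, and
`-x ^ p * log x = -(x ^ p * log (x ^ p)) / p ≤ exp (-1) / p` because `t * log t ≥ -exp (-1)`. -/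

namespace Real

theorem log_le_rpow_sub_one_div_s3 {x θ : ℝ} (hx : 0 < x) (hθ : 0 < θ) :
    log x ≤ (x ^ θ - 1) / θ := by
  rw [le_div_iff₀ hθ, mul_comm, ← log_rpow hx]
  exact log_le_sub_one_of_pos (rpow_pos_of_pos hx θ)

theorem neg_exp_neg_one_le_mul_log {x : ℝ} (hx : 0 ≤ x) : -exp (-1) ≤ x * log x := by
  rcases hx.eq_or_lt with rfl | hx
  · simp [(exp_pos _).le]
  -- `t - 1 ≤ t * log t` at `t = e * x`
  have h := self_sub_one_le_mul_log (mul_pos (exp_pos 1) hx).le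
  rw [log_mul (exp_pos 1).ne' hx.ne', log_exp] at h
  have h' : -1 ≤ exp 1 * (x * log x) := by linarith
  rw [exp_neg, neg_le, ← one_div, le_div_iff₀' (exp_pos 1), mul_neg]
  linarith

theorem neg_rpow_mul_log_le {x p : ℝ} (hx : 0 < x) (hp : 0 < p) :
    -(x ^ p * log x) ≤ exp (-1) / p := by
  have h := neg_exp_neg_one_le_mul_log (rpow_pos_of_pos hx p).le
  rw [log_rpow hx p] at h
  rw [le_div_iff₀ hp]
  linarith

end Real

open Real in
theorem stmt_3 (θ w₀ ρ m : ℝ) (hθ : θ ∈ Set.Ioc (0:ℝ) 1) (hw : 0 < w₀) (hρ : 0 < ρ)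
    (hinv : |m| / ρ + (ρ ^ θ - 1) / θ ≤ w₀) (hρb : ρ ≤ Real.exp w₀) :
    |m| / ρ ^ ((2:ℝ)/3) ≤ w₀ * Real.exp (w₀ / 3) + 3 * Real.exp (-1) := by
  have hmom : |m| / ρ ≤ w₀ - log ρ := by linarith [log_le_rpow_sub_one_div_s3 hρ hθ.1]
  have hcube : ρ ^ ((1:ℝ)/3) ≤ exp (w₀ / 3) := by
    calc ρ ^ ((1:ℝ)/3) ≤ exp w₀ ^ ((1:ℝ)/3) := rpow_le_rpow hρ.le hρb (by norm_num)
      _ = exp (w₀ / 3) := by rw [← exp_mul]; ring_nf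
  have hlog : -(ρ ^ ((1:ℝ)/3) * log ρ) ≤ 3 * exp (-1) :=
    (neg_rpow_mul_log_le hρ (by norm_num)).trans_eq (by ring)
  calc |m| / ρ ^ ((2:ℝ)/3) = |m| / ρ * ρ ^ ((1:ℝ)/3) := by
        rw [div_mul_eq_mul_div, div_eq_div_iff (rpow_pos_of_pos hρ _).ne' hρ.ne', mul_assoc,
          ← rpow_add hρ]
        norm_num
    _ ≤ (w₀ - log ρ) * ρ ^ ((1:ℝ)/3) := by gcongr
    _ = w₀ * ρ ^ ((1:ℝ)/3) - ρ ^ ((1:ℝ)/3) * log ρ := by ring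
    _ ≤ w₀ * exp (w₀ / 3) + 3 * exp (-1) := by
        linarith [mul_le_mul_of_nonneg_left hcube hw.le]
end

section
/- Let w₀ > 0 and θ ∈ (0,1]. Define the isentropic mechanical energy η*^{(θ)}(ρ,m) = m²/(2ρ) + ρ(ρ^{2θ} − 1)/(2θ(2θ+1)) and the isothermal mechanical energy η*^{(0)}(ρ,m) = m²/(2ρ) + ρ·ln ρ. Then there is a constant C = C(w₀) such that for all ρ ∈ (0, e^{w₀}] and all m with |m| ≤ ρ(|ln ρ| + w₀), one has |η*^{(θ)}(ρ,m) − η*^{(0)}(ρ,m)| ≤ C·θ. -/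
/-!
Writing `t = 2θ` and `x = t log ρ`, so that `ρ ^ t = exp x`, the difference of the two energies is
`t / (t + 1) * (ρ (exp x - 1 - x) / t² - ρ log ρ)`. The Taylor remainder satisfies
`0 ≤ exp x - 1 - x ≤ x² exp (max x 0)`, so the bracket is bounded by
`ρ (log ρ)² exp (max x 0) + ρ |log ρ|`, which stays bounded on `(0, exp w₀]`: near `ρ = 0`
because `ρ (log ρ)²` and `ρ log ρ` are bounded there, and elsewhere because `log ρ ≤ w₀`.
-/

open Real

namespace Real

lemma exp_sub_one_sub_le_mul_exp_sub_one (x : ℝ) : exp x - 1 - x ≤ x * (exp x - 1) := by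
  have h : exp x * exp (-x) = 1 := by rw [← exp_add, add_neg_cancel, exp_zero]
  nlinarith [add_one_le_exp (-x), exp_pos x]

lemma mul_exp_sub_one_le_sq_mul_exp_max (x : ℝ) : x * (exp x - 1) ≤ x ^ 2 * exp (max x 0) := by
  rcases le_total x 0 with hx | hx
  · rw [max_eq_right hx, exp_zero]
    nlinarith [add_one_le_exp x]
  · rw [max_eq_left hx]
    have h : exp x * exp (-x) = 1 := by rw [← exp_add, add_neg_cancel, exp_zero]
    have hexp : exp x - 1 ≤ x * exp x := by nlinarith [add_one_le_exp (-x), exp_pos x]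
    nlinarith [mul_le_mul_of_nonneg_left hexp hx]

lemma exp_sub_one_sub_le_sq_mul_exp_max (x : ℝ) : exp x - 1 - x ≤ x ^ 2 * exp (max x 0) :=
  (exp_sub_one_sub_le_mul_exp_sub_one x).trans (mul_exp_sub_one_le_sq_mul_exp_max x)

lemma mul_log_sq_lt_four {ρ : ℝ} (hρ : 0 < ρ) (hρ1 : ρ ≤ 1) : ρ * log ρ ^ 2 < 4 := by
  have h := abs_log_mul_self_rpow_lt ρ (1 / 2) hρ hρ1 (by norm_num)
  have hsq : (ρ ^ (1 / 2 : ℝ)) ^ 2 = ρ := by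
    rw [← rpow_natCast, ← rpow_mul hρ.le]; norm_num
  calc ρ * log ρ ^ 2 = |log ρ * ρ ^ (1 / 2 : ℝ)| ^ 2 := by rw [sq_abs, mul_pow, hsq]; ring
    _ < (1 / (1 / 2)) ^ 2 := by gcongr
    _ = 4 := by norm_num

section BoundedDensity

variable {ρ w : ℝ} (hρ : 0 < ρ) (hρw : ρ ≤ exp w)
include hρ hρw

lemma log_le_of_le_exp : log ρ ≤ w := (log_le_iff_le_exp hρ).2 hρw

lemma mul_log_sq_le_of_le_exp : ρ * log ρ ^ 2 ≤ 4 + w ^ 2 * exp w := by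
  rcases le_total ρ 1 with hρ1 | hρ1
  · have : 0 ≤ w ^ 2 * exp w := by positivity
    linarith [mul_log_sq_lt_four hρ hρ1]
  · have hL := log_nonneg hρ1
    have hLw := log_le_of_le_exp hρ hρw
    have : log ρ ^ 2 ≤ w ^ 2 := pow_le_pow_left₀ hL hLw 2
    nlinarith [mul_le_mul this hρw hρ.le (sq_nonneg w)]

lemma mul_abs_log_le_of_le_exp (hw : 0 ≤ w) : ρ * |log ρ| ≤ 1 + w * exp w := by
  rcases le_total ρ 1 with hρ1 | hρ1
  · have h := abs_log_mul_self_lt ρ hρ hρ1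
    rw [abs_mul, abs_of_pos hρ] at h
    nlinarith [mul_nonneg hw (exp_pos w).le]
  · rw [abs_of_nonneg (log_nonneg hρ1)]
    nlinarith [mul_le_mul hρw (log_le_of_le_exp hρ hρw) (log_nonneg hρ1) (exp_pos w).le]

lemma exp_max_mul_log_le {t : ℝ} (ht : 0 < t) (ht2 : t ≤ 2) (hw : 0 ≤ w) :
    exp (max (t * log ρ) 0) ≤ exp (2 * w) := by
  have hLw := log_le_of_le_exp hρ hρw
  refine exp_le_exp.2 (max_le ?_ (by linarith))
  rcases le_total (log ρ) 0 with hL | hL <;> nlinarith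

end BoundedDensity

lemma abs_mul_rpow_sub_one_div_sub_mul_log_le {ρ t : ℝ} (hρ : 0 < ρ) (ht : 0 < t) :
    |ρ * (ρ ^ t - 1) / (t * (t + 1)) - ρ * log ρ| ≤
      t * (ρ * log ρ ^ 2 * exp (max (t * log ρ) 0) + ρ * |log ρ|) := by
  set L := log ρ
  set R := (exp (t * L) - 1 - t * L) / t ^ 2 with hR_def
  have hid : ρ * (ρ ^ t - 1) / (t * (t + 1)) - ρ * L = t / (t + 1) * (ρ * R - ρ * L) := by
    rw [rpow_def_of_pos hρ, mul_comm L t, hR_def]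
    field_simp
    ring
  have hR0 : 0 ≤ R := div_nonneg (by linarith [add_one_le_exp (t * L)]) (sq_nonneg t)
  have hR : R ≤ L ^ 2 * exp (max (t * L) 0) := by
    rw [div_le_iff₀ (by positivity)]
    linarith [exp_sub_one_sub_le_sq_mul_exp_max (t * L)]
  have hfrac : t / (t + 1) ≤ t := div_le_self ht.le (by linarith)
  rw [hid, abs_mul, abs_of_pos (by positivity)]
  calc t / (t + 1) * |ρ * R - ρ * L| ≤ t * (ρ * R + ρ * |L|) := by
        gcongr
        refine (abs_sub _ _).trans_eq ?_
        rw [abs_mul, abs_mul, abs_of_pos hρ, abs_of_nonneg hR0]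
    _ ≤ t * (ρ * L ^ 2 * exp (max (t * L) 0) + ρ * |L|) := by
        rw [mul_assoc ρ]; gcongr

end Real

theorem stmt_19 (w₀ : ℝ) (hw : 0 < w₀) :
    ∃ C > 0, ∀ θ ∈ Set.Ioc (0:ℝ) 1, ∀ ρ ∈ Set.Ioc (0:ℝ) (Real.exp w₀),
      ∀ m : ℝ, |m| ≤ ρ * (|Real.log ρ| + w₀) →
        |(m ^ 2 / (2 * ρ) + ρ * (ρ ^ (2 * θ) - 1) / (2 * θ * (2 * θ + 1))) -
            (m ^ 2 / (2 * ρ) + ρ * Real.log ρ)| ≤ C * θ := by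
  refine ⟨2 * ((4 + w₀ ^ 2 * exp w₀) * exp (2 * w₀) + (1 + w₀ * exp w₀)), by positivity, ?_⟩
  rintro θ ⟨hθ0, hθ1⟩ ρ ⟨hρ0, hρw⟩ m -
  have ht : 0 < 2 * θ := by positivity
  have hsq := mul_log_sq_le_of_le_exp hρ0 hρw
  have habs := mul_abs_log_le_of_le_exp hρ0 hρw hw.le
  have hexp := exp_max_mul_log_le hρ0 hρw ht (by linarith) hw.le
  rw [add_sub_add_left_eq_sub]
  calc _ ≤ 2 * θ * (ρ * log ρ ^ 2 * exp (max (2 * θ * log ρ) 0) + ρ * |log ρ|) :=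
        abs_mul_rpow_sub_one_div_sub_mul_log_le hρ0 ht
    _ ≤ 2 * θ * ((4 + w₀ ^ 2 * exp w₀) * exp (2 * w₀) + (1 + w₀ * exp w₀)) := by
        gcongr
    _ = _ := by ring
end
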